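/- arXiv:1609.06243 — 2 statements merged into one kernel-verified Lean document; each statement's English description precedes it below -/
import Mathlib

section
/- Fix integers 0 ≤ k ≤ n. Suppose f : 𝒮 → R satisfies: (i) for all S, S′ adjacent via (i,j), (αⱼ − αᵢ) divides f(S) − f(S′) and (αⱼ + αᵢ) divides f(S) + f(S′); and (ii) for every S ∈ 𝒮, (∏_{i∈S} αᵢ) divides f(S). Then there exists a unique h : 𝒮 → R with f(S) = (∏_{i∈S} αᵢ)·h(S) for every S, and this h lies in the real GKM ring A(n,k), i.e. (αⱼ² − αᵢ²) divides h(S) − h(S′) for all S, S′ adjacent via (i,j). -/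
open MvPolynomial Finset

/-- `𝒮`: the collection of `k`-element subsets of `{1,…,n}` (here `Fin n`). -/
abbrev GKMIndex (n k : ℕ) := {S : Finset (Fin n) // S.card = k}

/-- Membership in the real GKM ring `A(n,k)`. -/
def memA (n k : ℕ) (f : GKMIndex n k → MvPolynomial (Fin n) ℚ) : Prop :=
  ∀ (S S' : GKMIndex n k) (i j : Fin n),
    i ∈ S.1 → j ∉ S.1 → S'.1 = insert j (S.1.erase i) →
      ((X j) ^ 2 - (X i) ^ 2) ∣ (f S - f S')

lemma prime_X_mv {n : ℕ} (j : Fin n) : Prime (X j : MvPolynomial (Fin n) ℚ) := by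
  let e := (renameEquiv ℚ (Equiv.optionSubtypeNe j).symm).trans
    (optionEquivLeft ℚ {b : Fin n // b ≠ j})
  have he : e (X j) = Polynomial.X := by
    simp [e, renameEquiv_apply, rename_X, Equiv.optionSubtypeNe_symm_self,
      optionEquivLeft_X_none]
  have hp : Prime (e (X j)) := he ▸ Polynomial.prime_X
  exact (MulEquiv.prime_iff e.toRingEquiv.toMulEquiv).mp hp

lemma prime_shift {n : ℕ} (i j : Fin n) (hij : i ≠ j) (c : ℚ) :
    Prime (X j + C c * X i : MvPolynomial (Fin n) ℚ) := by
  let φ : MvPolynomial (Fin n) ℚ →ₐ[ℚ] MvPolynomial (Fin n) ℚ :=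
    aeval (fun l => if l = j then X j + C c * X i else X l)
  let ψ : MvPolynomial (Fin n) ℚ →ₐ[ℚ] MvPolynomial (Fin n) ℚ :=
    aeval (fun l => if l = j then X j - C c * X i else X l)
  have h1 : φ.comp ψ = AlgHom.id ℚ _ := by
    apply algHom_ext; intro l
    by_cases hl : l = j <;> simp [φ, ψ, hl, hij, Ne.symm hij]
  have h2 : ψ.comp φ = AlgHom.id ℚ _ := by
    apply algHom_ext; intro l
    by_cases hl : l = j <;> simp [φ, ψ, hl, hij, Ne.symm hij]
  let e := AlgEquiv.ofAlgHom φ ψ h1 h2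
  have he : e (X j) = X j + C c * X i := by simp [e, φ, aeval_X]
  exact he ▸ (MulEquiv.prime_iff (p := X j) e.toRingEquiv.toMulEquiv).mpr (prime_X_mv j)

lemma prime_sub' {n : ℕ} (i j : Fin n) (hij : i ≠ j) :
    Prime (X j - X i : MvPolynomial (Fin n) ℚ) := by
  have := prime_shift i j hij (-1)
  have h : (X j + C (-1 : ℚ) * X i : MvPolynomial (Fin n) ℚ) = X j - X i := by
    simp; ring
  rwa [h] at this

lemma prime_add' {n : ℕ} (i j : Fin n) (hij : i ≠ j) :
    Prime (X j + X i : MvPolynomial (Fin n) ℚ) := by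
  have := prime_shift i j hij 1
  have h : (X j + C (1 : ℚ) * X i : MvPolynomial (Fin n) ℚ) = X j + X i := by
    simp
  rwa [h] at this

lemma notdvd_sub {n : ℕ} (i j l : Fin n) : ¬ ((X j - X i : MvPolynomial (Fin n) ℚ) ∣ X l) := by
  rintro ⟨q, hq⟩
  have := congrArg (eval (fun _ => (1 : ℚ))) hq
  simp at this

lemma notdvd_add {n : ℕ} (i j l : Fin n) (hij : i ≠ j) :
    ¬ ((X j + X i : MvPolynomial (Fin n) ℚ) ∣ X l) := by
  rintro ⟨q, hq⟩
  have := congrArg (eval (fun m => if m = i then (-1 : ℚ) else 1)) hq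
  simp [Ne.symm hij] at this
  by_cases hl : l = i <;> simp [hl] at this

lemma notdvd_add_sub {n : ℕ} (i j : Fin n) (hij : i ≠ j) :
    ¬ ((X j + X i : MvPolynomial (Fin n) ℚ) ∣ (X j - X i : MvPolynomial (Fin n) ℚ)) := by
  rintro ⟨q, hq⟩
  have := congrArg (eval (fun m => if m = i then (-1 : ℚ) else 1)) hq
  simp [Ne.symm hij] at this

/-- If `f : 𝒮 → R` satisfies, for all adjacent `S, S'` via `(i,j)`,
`(αⱼ − αᵢ) ∣ f(S) − f(S')` and `(αⱼ + αᵢ) ∣ f(S) + f(S')`, and `(∏_{i∈S} αᵢ) ∣ f(S)` for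
every `S`, then there is a unique `h : 𝒮 → R` with `f(S) = (∏_{i∈S} αᵢ)·h(S)` for all `S`,
and this `h` lies in the real GKM ring `A(n,k)`. -/
theorem euler_class_division (n k : ℕ) (hk : k ≤ n)
    (f : GKMIndex n k → MvPolynomial (Fin n) ℚ)
    (hadj : ∀ (S S' : GKMIndex n k) (i j : Fin n),
      i ∈ S.1 → j ∉ S.1 → S'.1 = insert j (S.1.erase i) →
        (X j - X i) ∣ (f S - f S') ∧ (X j + X i) ∣ (f S + f S'))
    (hdvd : ∀ S : GKMIndex n k, (∏ i ∈ S.1, (X i : MvPolynomial (Fin n) ℚ)) ∣ f S) :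
    (∃! h : GKMIndex n k → MvPolynomial (Fin n) ℚ,
      ∀ S : GKMIndex n k, f S = (∏ i ∈ S.1, (X i : MvPolynomial (Fin n) ℚ)) * h S) ∧
    (∀ h : GKMIndex n k → MvPolynomial (Fin n) ℚ,
      (∀ S : GKMIndex n k, f S = (∏ i ∈ S.1, (X i : MvPolynomial (Fin n) ℚ)) * h S) →
      memA n k h) := by
  have hne : ∀ S : GKMIndex n k, (∏ i ∈ S.1, (X i : MvPolynomial (Fin n) ℚ)) ≠ 0 := by
    intro S
    exact Finset.prod_ne_zero_iff.mpr fun p _ => X_ne_zero p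
  constructor
  · refine ⟨fun S => (hdvd S).choose, fun S => (hdvd S).choose_spec, ?_⟩
    intro g hg
    funext S
    exact mul_left_cancel₀ (hne S) ((hg S).symm.trans (hdvd S).choose_spec)
  · intro h hh S S' i j hi hj hS'
    have hij : i ≠ j := fun e => hj (e ▸ hi)
    set P : MvPolynomial (Fin n) ℚ := ∏ p ∈ S.1.erase i, X p with hP
    have heS : ∏ p ∈ S.1, (X p : MvPolynomial (Fin n) ℚ) = X i * P :=
      (Finset.mul_prod_erase _ _ hi).symm
    have hjP : j ∉ S.1.erase i := fun hm => hj (Finset.mem_of_mem_erase hm)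
    have heS' : ∏ p ∈ S'.1, (X p : MvPolynomial (Fin n) ℚ) = X j * P := by
      rw [hS', Finset.prod_insert hjP]
    obtain ⟨hd, hs⟩ := hadj S S' i j hi hj hS'
    have key_d : (X j - X i : MvPolynomial (Fin n) ℚ) ∣ X i * P * (h S - h S') := by
      have heq : X i * P * (h S - h S')
          = (f S - f S') + (X j - X i) * (P * h S') := by
        rw [hh S, hh S', heS, heS']; ring
      rw [heq]
      exact dvd_add hd (Dvd.intro _ rfl)
    have key_s : (X j + X i : MvPolynomial (Fin n) ℚ) ∣ X i * P * (h S - h S') := by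
      have heq : X i * P * (h S - h S')
          = (f S + f S') - (X j + X i) * (P * h S') := by
        rw [hh S, hh S', heS, heS']; ring
      rw [heq]
      exact dvd_sub hs (Dvd.intro _ rfl)
    have hpd := prime_sub' i j hij
    have hps := prime_add' i j hij
    have hdprod : ¬ ((X j - X i : MvPolynomial (Fin n) ℚ) ∣ X i * P) := by
      rw [← heS]
      intro hdd
      obtain ⟨p, _, hp⟩ := (hpd.dvd_finset_prod_iff _).mp hdd
      exact notdvd_sub i j p hp
    have hsprod : ¬ ((X j + X i : MvPolynomial (Fin n) ℚ) ∣ X i * P) := by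
      rw [← heS]
      intro hdd
      obtain ⟨p, _, hp⟩ := (hps.dvd_finset_prod_iff _).mp hdd
      exact notdvd_add i j p hij hp
    have hdA : (X j - X i : MvPolynomial (Fin n) ℚ) ∣ (h S - h S') :=
      (hpd.dvd_or_dvd key_d).resolve_left hdprod
    have hsA : (X j + X i : MvPolynomial (Fin n) ℚ) ∣ (h S - h S') :=
      (hps.dvd_or_dvd key_s).resolve_left hsprod
    obtain ⟨B, hB⟩ := hdA
    have : (X j + X i : MvPolynomial (Fin n) ℚ) ∣ (X j - X i) * B := hB ▸ hsA
    have hsB : (X j + X i : MvPolynomial (Fin n) ℚ) ∣ B :=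
      (hps.dvd_or_dvd this).resolve_left (notdvd_add_sub i j hij)
    obtain ⟨C, hC⟩ := hsB
    have : h S - h S' = ((X j) ^ 2 - (X i) ^ 2) * C := by
      rw [hB, hC]; ring
    exact ⟨C, this⟩
end

section
/- Fix integers 0 ≤ k ≤ n and a tuple of nonnegative integers (i₁,…,i_k) with i₁ + 2i₂ + ⋯ + k·i_k = k(n−k). Then the rational number Σ_{S} ( ∏_{l=1}^{k} e_l(S)^{i_l} ) / ( ∏_{i∈S} ∏_{j∉S} (j − i) ), where the sum is over all k-element subsets S of {1,2,…,n} and e_l(S) denotes the l-th elementary symmetric function of the elements of S (as integers), is an integer. -/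
open Finset

open MvPolynomial

noncomputable section
namespace ChernAux

abbrev R := MvPolynomial ℕ ℤ

def e0 : ℕ ≃ Option ℕ where
  toFun n := match n with | 0 => none | (m+1) => some m
  invFun o := o.elim 0 (·+1)
  left_inv n := by cases n <;> rfl
  right_inv o := by cases o <;> rfl

/-- the merge homomorphism sending `X j ↦ X i` and fixing other variables -/
def μ (i j : ℕ) : R →ₐ[ℤ] R := aeval (fun a => if a = j then X i else X a)

lemma μ_X (i j a : ℕ) : μ i j (X a) = if a = j then X i else X a := by
  simp [μ]

section ij
variable {i j : ℕ} (hij : i ≠ j)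

def gEquiv (i : ℕ) : ℕ ≃ Option ℕ := (Equiv.swap i 0).trans e0

lemma gEquiv_i (i : ℕ) : gEquiv i i = none := by
  simp [gEquiv, e0]

include hij in
lemma gEquiv_j : ∃ m, gEquiv i j = some m := by
  cases h : gEquiv i j with
  | none =>
    exfalso
    have : gEquiv i j = gEquiv i i := by rw [h, gEquiv_i]
    exact hij.symm ((gEquiv i).injective this)
  | some m => exact ⟨m, rfl⟩

def Eiso (i : ℕ) : R ≃ₐ[ℤ] Polynomial R :=
  (renameEquiv ℤ (gEquiv i)).trans (optionEquivLeft ℤ ℕ)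

lemma Eiso_X_i (i : ℕ) : Eiso i (X i) = Polynomial.X := by
  simp [Eiso, renameEquiv_apply, rename_X, gEquiv_i, optionEquivLeft_X_none]

lemma Eiso_X_other {a m : ℕ} (h : gEquiv i a = some m) :
    Eiso i (X a) = Polynomial.C (X m) := by
  simp [Eiso, renameEquiv_apply, rename_X, h, optionEquivLeft_X_some]

include hij in
theorem prime_X_sub_X : Prime (X i - X j : R) := by
  obtain ⟨m, hm⟩ := gEquiv_j hij
  have h1 : Eiso i (X i - X j) = Polynomial.X - Polynomial.C (X m) := by
    rw [map_sub, Eiso_X_i, Eiso_X_other hm]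
  have := Polynomial.prime_X_sub_C (X m : R)
  rw [← h1] at this
  exact (MulEquiv.prime_iff (p := (X i - X j : R)) (Eiso i)).mp this

include hij in
theorem dvd_of_merge_eq_zero {F : R} (hF : μ i j F = 0) : (X i - X j : R) ∣ F := by
  obtain ⟨m, hm⟩ := gEquiv_j hij
  -- ρ : rename after merge
  set ρ : R →ₐ[ℤ] R := aeval (fun a => (X ((gEquiv i a).getD m) : R)) with hρ
  have key : (Polynomial.evalRingHom (X m : R)).comp ((Eiso i : R →+* Polynomial R)) =
      (ρ : R →+* R).comp ((μ i j : R →+* R)) := by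
    apply MvPolynomial.ringHom_ext
    · intro r
      simp [Eiso, renameEquiv_apply, optionEquivLeft_C, μ, ρ]
    · intro a
      by_cases ha : a = i
      · rw [ha]
        simp only [RingHom.coe_comp, Function.comp_apply]
        rw [show ((Eiso i : R →+* Polynomial R) (X i)) = Polynomial.X from Eiso_X_i i]
        simp only [Polynomial.coe_evalRingHom, Polynomial.eval_X]
        have : (μ i j) (X i) = X i := by rw [μ_X, if_neg hij]
        rw [show ((μ i j : R →+* R) (X i)) = X i from this]
        show X m = ρ (X i)
        simp [ρ, gEquiv_i]
      · by_cases haj : a = j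
        · rw [haj]
          obtain ⟨b, hb⟩ := gEquiv_j hij
          simp only [RingHom.coe_comp, Function.comp_apply]
          rw [show ((Eiso i : R →+* Polynomial R) (X j)) = Polynomial.C (X b) from
            Eiso_X_other hb]
          simp only [Polynomial.coe_evalRingHom, Polynomial.eval_C]
          have : (μ i j) (X j) = X i := by rw [μ_X, if_pos rfl]
          rw [show ((μ i j : R →+* R) (X j)) = X i from this]
          show X b = ρ (X i)
          have : b = m := by rw [hm] at hb; exact (Option.some_injective _ hb).symm
          subst this
          simp [ρ, gEquiv_i]
        · obtain ⟨b, hb⟩ : ∃ b, gEquiv i a = some b := by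
            cases h : gEquiv i a with
            | none =>
              exfalso
              have : gEquiv i a = gEquiv i i := by rw [h, gEquiv_i]
              exact ha ((gEquiv i).injective this)
            | some b => exact ⟨b, rfl⟩
          simp only [RingHom.coe_comp, Function.comp_apply]
          rw [show ((Eiso i : R →+* Polynomial R) (X a)) = Polynomial.C (X b) from
            Eiso_X_other hb]
          simp only [Polynomial.coe_evalRingHom, Polynomial.eval_C]
          have : (μ i j) (X a) = X a := by rw [μ_X, if_neg haj]
          rw [show ((μ i j : R →+* R) (X a)) = X a from this]
          show X b = ρ (X a)
          simp [ρ, hb]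
  have hroot : Polynomial.eval (X m : R) (Eiso i F) = 0 := by
    have h2 := congrArg (fun f => f F) key
    simp only [RingHom.coe_comp, Function.comp_apply] at h2
    rw [show ((μ i j : R →+* R) F) = μ i j F from rfl, hF, map_zero] at h2
    simpa using h2
  have hdvd : (Polynomial.X - Polynomial.C (X m : R)) ∣ Eiso i F :=
    Polynomial.dvd_iff_isRoot.mpr hroot
  have h1 : Eiso i (X i - X j) = Polynomial.X - Polynomial.C (X m) := by
    rw [map_sub, Eiso_X_i, Eiso_X_other hm]
  rw [← h1] at hdvd
  have := map_dvd (Eiso i).symm hdvd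
  simpa using this

end ij

theorem not_dvd_of_ne {a b c d : ℕ} (hab : a < b) (hcd : c < d)
    (hne : (a, b) ≠ (c, d)) : ¬ ((X b - X a : R) ∣ (X d - X c)) := by
  intro h
  obtain ⟨t, ht⟩ := h
  have h0 : μ a b (X b - X a) = 0 := by
    rw [map_sub, μ_X, μ_X, if_pos rfl, if_neg hab.ne, sub_self]
  have h1 : μ a b (X d - X c) = 0 := by rw [ht, map_mul, h0, zero_mul]
  rw [map_sub, μ_X, μ_X] at h1
  have h2 : (if d = b then (X a : R) else X d) = (if c = b then (X a : R) else X c) :=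
    sub_eq_zero.mp h1
  by_cases hdb : d = b
  · have hcb : c ≠ b := by omega
    rw [if_pos hdb, if_neg hcb] at h2
    have : a = c := X_injective h2
    exact hne (by rw [this, hdb])
  · rw [if_neg hdb] at h2
    by_cases hcb : c = b
    · rw [if_pos hcb] at h2
      have : d = a := X_injective h2
      omega
    · rw [if_neg hcb] at h2
      have : d = c := X_injective h2
      omega

theorem prod_sq_dvd {α : Type*} [DecidableEq α] (s : Finset α) (p : α → R)
    (hprime : ∀ a ∈ s, Prime (p a))
    (hnd : ∀ a ∈ s, ∀ b ∈ s, a ≠ b → ¬ (p a ∣ p b)) :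
    ∀ F : R, (∀ a ∈ s, p a ^ 2 ∣ F) → (∏ a ∈ s, p a ^ 2) ∣ F := by
  classical
  induction s using Finset.induction with
  | empty => intro F _; simp
  | @insert a s ha ih =>
    intro F hdvd
    obtain ⟨G, hG⟩ := hdvd a (Finset.mem_insert_self a s)
    have hpa : Prime (p a) := hprime a (Finset.mem_insert_self a s)
    have hGdvd : ∀ q ∈ s, p q ^ 2 ∣ G := by
      intro q hq
      have hpq : Prime (p q) := hprime q (Finset.mem_insert_of_mem hq)
      have hqa : ¬ (p q ∣ p a) :=
        hnd q (Finset.mem_insert_of_mem hq) a (Finset.mem_insert_self a s)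
          (fun h => ha (h ▸ hq))
      have hq2 : p q ^ 2 ∣ p a ^ 2 * G := hG ▸ hdvd q (Finset.mem_insert_of_mem hq)
      have hq1 : p q ∣ G := by
        have : p q ∣ p a ^ 2 * G := dvd_trans (dvd_pow_self _ (by norm_num)) hq2
        rcases hpq.dvd_mul.mp this with h | h
        · exact absurd (hpq.dvd_of_dvd_pow h) hqa
        · exact h
      obtain ⟨G1, hG1⟩ := hq1
      have hq3 : p q * p q ∣ p a ^ 2 * (p q * G1) := by
        rw [← hG1, ← pow_two]; exact hq2
      have hq4 : p q ∣ p a ^ 2 * G1 := by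
        have : p q * p q ∣ p q * (p a ^ 2 * G1) := by
          rw [mul_left_comm]; exact hq3
        exact (mul_dvd_mul_iff_left hpq.ne_zero).mp this
      have hq5 : p q ∣ G1 := by
        rcases hpq.dvd_mul.mp hq4 with h | h
        · exact absurd (hpq.dvd_of_dvd_pow h) hqa
        · exact h
      obtain ⟨G2, hG2⟩ := hq5
      exact ⟨G2, by rw [hG1, hG2, pow_two, mul_assoc]⟩
    have hrest := ih (fun x hx => hprime x (Finset.mem_insert_of_mem hx))
      (fun x hx y hy hxy => hnd x (Finset.mem_insert_of_mem hx) y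
        (Finset.mem_insert_of_mem hy) hxy) G hGdvd
    obtain ⟨Q, hQ⟩ := hrest
    refine ⟨Q, ?_⟩
    rw [Finset.prod_insert ha, hG, hQ, mul_assoc]


section main

def I (n : ℕ) : Finset ℕ := Finset.Icc 1 n

def pairs (n : ℕ) : Finset (ℕ × ℕ) := (I n ×ˢ I n).filter fun p => p.1 < p.2

def PP (k : ℕ) (iv : Fin k → ℕ) (S : Finset ℕ) : R :=
  ∏ l : Fin k, (∑ T ∈ S.powersetCard (l.1 + 1), ∏ m ∈ T, (X m : R)) ^ (iv l)

def V2 (n : ℕ) (S : Finset ℕ) : R :=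
  ∏ p ∈ (pairs n).filter (fun p => (p.1 ∈ S ↔ p.2 ∈ S)), ((X p.2 : R) - X p.1) ^ 2

def DD (n : ℕ) (S : Finset ℕ) : R :=
  ∏ q ∈ S ×ˢ (I n \ S), ((X q.2 : R) - X q.1)

def FF (n k : ℕ) (iv : Fin k → ℕ) : R :=
  ∑ S ∈ Finset.powersetCard k (I n), PP k iv S * V2 n S * DD n S

def EE (n i j : ℕ) (S : Finset ℕ) : R :=
  ∏ q ∈ (S ×ˢ (I n \ S)).erase (if i ∈ S then (i, j) else (j, i)), ((X q.2 : R) - X q.1)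

lemma sq_sub_comm (a b : R) : (a - b) ^ 2 = (b - a) ^ 2 := by ring

section pair
variable {n i j : ℕ}

local notation "τ" => (Equiv.swap i j : Equiv.Perm ℕ)

lemma tau_invol (a : ℕ) : τ (τ a) = a := Equiv.swap_apply_self i j a

lemma mem_image_tau {S : Finset ℕ} {a : ℕ} : τ a ∈ S.image τ ↔ a ∈ S := by
  constructor
  · intro h
    obtain ⟨x, hx, hxe⟩ := Finset.mem_image.mp h
    rwa [← (Equiv.injective τ hxe)]
  · intro h; exact Finset.mem_image_of_mem _ h

lemma image_tau_image_tau (S : Finset ℕ) : (S.image τ).image τ = S := by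
  rw [Finset.image_image]
  have : (⇑τ ∘ ⇑τ) = id := by funext a; simp [tau_invol a]
  rw [this, Finset.image_id]

lemma i_mem_image_tau {S : Finset ℕ} : i ∈ S.image τ ↔ j ∈ S := by
  have h := mem_image_tau (i := i) (j := j) (S := S) (a := j)
  rwa [Equiv.swap_apply_right] at h

lemma j_mem_image_tau {S : Finset ℕ} : j ∈ S.image τ ↔ i ∈ S := by
  have h := mem_image_tau (i := i) (j := j) (S := S) (a := i)
  rwa [Equiv.swap_apply_left] at h

variable (hij : i < j)

include hij in
lemma v_tau (a : ℕ) : μ i j (X (τ a)) = μ i j (X a) := by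
  rw [μ_X, μ_X]
  rcases eq_or_ne a i with rfl | hai
  · rw [Equiv.swap_apply_left, if_pos rfl, if_neg hij.ne]
  · rcases eq_or_ne a j with rfl | haj
    · rw [Equiv.swap_apply_right, if_neg hij.ne, if_pos rfl]
    · rw [Equiv.swap_apply_of_ne_of_ne hai haj]

variable (hi : i ∈ I n) (hj : j ∈ I n)

include hi hj in
lemma tau_mem_I {a : ℕ} (ha : a ∈ I n) : τ a ∈ I n := by
  rcases eq_or_ne a i with rfl | hai
  · rw [Equiv.swap_apply_left]; exact hj
  · rcases eq_or_ne a j with rfl | haj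
    · rw [Equiv.swap_apply_right]; exact hi
    · rw [Equiv.swap_apply_of_ne_of_ne hai haj]; exact ha

include hi hj in
lemma image_tau_mem_powersetCard {S : Finset ℕ} {k : ℕ}
    (hS : S ∈ Finset.powersetCard k (I n)) :
    S.image τ ∈ Finset.powersetCard k (I n) := by
  rw [Finset.mem_powersetCard] at hS ⊢
  constructor
  · intro a ha
    obtain ⟨x, hx, rfl⟩ := Finset.mem_image.mp ha
    exact tau_mem_I hi hj (hS.1 hx)
  · rw [Finset.card_image_of_injective _ (Equiv.injective τ)]; exact hS.2

include hij in
lemma mu_PP (k : ℕ) (iv : Fin k → ℕ) (S : Finset ℕ) :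
    μ i j (PP k iv (S.image τ)) = μ i j (PP k iv S) := by
  rw [PP, PP, map_prod, map_prod]
  refine Finset.prod_congr rfl fun l _ => ?_
  rw [map_pow, map_pow]
  congr 1
  rw [map_sum, map_sum]
  refine (Finset.sum_nbij' (fun T => T.image τ) (fun T => T.image τ) ?_ ?_ ?_ ?_ ?_).symm
  · intro T hT
    rw [Finset.mem_powersetCard] at hT ⊢
    refine ⟨fun a ha => ?_, ?_⟩
    · obtain ⟨x, hx, rfl⟩ := Finset.mem_image.mp ha
      exact Finset.mem_image_of_mem _ (hT.1 hx)
    · rw [Finset.card_image_of_injective _ (Equiv.injective τ)]; exact hT.2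
  · intro T hT
    rw [Finset.mem_powersetCard] at hT ⊢
    refine ⟨fun a ha => ?_, ?_⟩
    · obtain ⟨x, hx, rfl⟩ := Finset.mem_image.mp ha
      have := hT.1 hx
      obtain ⟨y, hy, rfl⟩ := Finset.mem_image.mp this
      rwa [tau_invol]
    · rw [Finset.card_image_of_injective _ (Equiv.injective τ)]; exact hT.2
  · intro T _; exact image_tau_image_tau T
  · intro T _; exact image_tau_image_tau T
  · intro T _
    rw [map_prod, map_prod, Finset.prod_image (fun a _ b _ h => Equiv.injective τ h)]
    exact Finset.prod_congr rfl fun a _ => (v_tau hij a).symm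

def rho (i j : ℕ) (p : ℕ × ℕ) : ℕ × ℕ :=
  if Equiv.swap i j p.1 < Equiv.swap i j p.2 then (Equiv.swap i j p.1, Equiv.swap i j p.2)
  else (Equiv.swap i j p.2, Equiv.swap i j p.1)

include hi hj in
lemma rho_mem {S : Finset ℕ} {p : ℕ × ℕ}
    (hp : p ∈ (pairs n).filter (fun q => (q.1 ∈ S ↔ q.2 ∈ S))) :
    rho i j p ∈ (pairs n).filter (fun q => (q.1 ∈ S.image τ ↔ q.2 ∈ S.image τ)) := by
  rw [Finset.mem_filter, pairs, Finset.mem_filter, Finset.mem_product] at hp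
  obtain ⟨⟨⟨h1, h2⟩, hlt⟩, hpure⟩ := hp
  have hne : τ p.1 ≠ τ p.2 := fun h => hlt.ne (Equiv.injective τ h)
  rw [Finset.mem_filter, pairs, Finset.mem_filter, Finset.mem_product]
  rw [rho]
  split_ifs with hcmp
  · exact ⟨⟨⟨tau_mem_I hi hj h1, tau_mem_I hi hj h2⟩, hcmp⟩,
      Iff.trans mem_image_tau (hpure.trans mem_image_tau.symm)⟩
  · have hlt2 : τ p.2 < τ p.1 := by omega
    exact ⟨⟨⟨tau_mem_I hi hj h2, tau_mem_I hi hj h1⟩, hlt2⟩,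
      Iff.trans mem_image_tau (hpure.symm.trans mem_image_tau.symm)⟩

lemma rho_invol {p : ℕ × ℕ} (hlt : p.1 < p.2) : rho i j (rho i j p) = p := by
  have hne : τ p.1 ≠ τ p.2 := fun h => hlt.ne (Equiv.injective τ h)
  by_cases hcmp : τ p.1 < τ p.2
  · simp [rho, hcmp, tau_invol, hlt]
  · have h2 : τ p.2 < τ p.1 := by omega
    simp [rho, hcmp, h2, tau_invol, hlt.asymm]

include hij hi hj in
lemma mu_V2 (S : Finset ℕ) : μ i j (V2 n (S.image τ)) = μ i j (V2 n S) := by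
  rw [V2, V2, map_prod, map_prod]
  refine (Finset.prod_nbij' (rho i j) (rho i j) ?_ ?_ ?_ ?_ ?_).symm
  · intro p hp; exact rho_mem hi hj hp
  · intro p hp
    have := rho_mem hi hj (S := S.image τ) hp
    rwa [image_tau_image_tau] at this
  · intro p hp
    rw [Finset.mem_filter, pairs, Finset.mem_filter] at hp
    exact rho_invol hp.1.2
  · intro p hp
    rw [Finset.mem_filter, pairs, Finset.mem_filter] at hp
    exact rho_invol hp.1.2
  · intro p _
    rw [rho]
    split_ifs with hcmp
    · show μ i j ((X p.2 - X p.1) ^ 2) = μ i j ((X (τ p.2) - X (τ p.1)) ^ 2)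
      rw [map_pow, map_pow, map_sub, map_sub, v_tau hij, v_tau hij]
    · show μ i j ((X p.2 - X p.1) ^ 2) = μ i j ((X (τ p.1) - X (τ p.2)) ^ 2)
      rw [map_pow, map_pow, map_sub, map_sub, v_tau hij, v_tau hij]
      exact sq_sub_comm _ _

include hij hi hj in
lemma mu_EE {S : Finset ℕ} (hiS : i ∈ S) (hjS : j ∉ S) :
    μ i j (EE n i j (S.image τ)) = μ i j (EE n i j S) := by
  have hiS' : ¬ (i ∈ S.image τ) := by rw [i_mem_image_tau]; exact hjS
  rw [EE, EE, if_pos hiS, if_neg hiS', map_prod, map_prod]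
  refine (Finset.prod_nbij' (fun q => (τ q.1, τ q.2)) (fun q => (τ q.1, τ q.2))
    ?_ ?_ ?_ ?_ ?_).symm
  · intro q hq
    rw [Finset.mem_erase, Finset.mem_product, Finset.mem_sdiff] at hq
    obtain ⟨hne, ⟨h1, h2, h3⟩⟩ := hq
    refine Finset.mem_erase.mpr ⟨?_, Finset.mem_product.mpr
      ⟨?_, Finset.mem_sdiff.mpr ⟨?_, ?_⟩⟩⟩
    · intro h
      rw [Prod.ext_iff] at h
      obtain ⟨e1, e2⟩ := h
      apply hne
      have e1' : q.1 = i := by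
        have := congrArg τ e1
        rwa [tau_invol, Equiv.swap_apply_right] at this
      have e2' : q.2 = j := by
        have := congrArg τ e2
        rwa [tau_invol, Equiv.swap_apply_left] at this
      exact Prod.ext e1' e2'
    · exact Finset.mem_image_of_mem _ h1
    · exact tau_mem_I hi hj h2
    · rw [mem_image_tau]; exact h3
  · intro q hq
    rw [Finset.mem_erase, Finset.mem_product, Finset.mem_sdiff] at hq
    obtain ⟨hne, ⟨h1, h2, h3⟩⟩ := hq
    refine Finset.mem_erase.mpr ⟨?_, Finset.mem_product.mpr
      ⟨?_, Finset.mem_sdiff.mpr ⟨?_, ?_⟩⟩⟩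
    · intro h
      rw [Prod.ext_iff] at h
      obtain ⟨e1, e2⟩ := h
      apply hne
      have e1' : q.1 = j := by
        have := congrArg τ e1
        rwa [tau_invol, Equiv.swap_apply_left] at this
      have e2' : q.2 = i := by
        have := congrArg τ e2
        rwa [tau_invol, Equiv.swap_apply_right] at this
      exact Prod.ext e1' e2'
    · have h1' : τ (τ q.1) ∈ S.image τ := by rwa [tau_invol]
      exact mem_image_tau.mp h1'
    · exact tau_mem_I hi hj h2
    · intro h
      apply h3
      have := Finset.mem_image_of_mem (⇑τ) h
      rwa [tau_invol] at this
  · intro q _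
    exact Prod.ext (tau_invol q.1) (tau_invol q.2)
  · intro q _
    exact Prod.ext (tau_invol q.1) (tau_invol q.2)
  · intro q _
    show μ i j (X q.2 - X q.1) = μ i j (X (τ q.2) - X (τ q.1))
    rw [map_sub, map_sub, v_tau hij, v_tau hij]

include hij hi hj in
theorem sq_dvd_FF (k : ℕ) (iv : Fin k → ℕ) : ((X j : R) - X i) ^ 2 ∣ FF n k iv := by
  rw [FF, ← Finset.sum_filter_add_sum_filter_not (Finset.powersetCard k (I n))
    (fun S => (i ∈ S ↔ j ∈ S))]
  apply dvd_add
  · apply Finset.dvd_sum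
    intro S hS
    rw [Finset.mem_filter] at hS
    have hpair : ((i, j) : ℕ × ℕ) ∈ (pairs n).filter (fun q => (q.1 ∈ S ↔ q.2 ∈ S)) := by
      rw [Finset.mem_filter, pairs, Finset.mem_filter, Finset.mem_product]
      exact ⟨⟨⟨hi, hj⟩, hij⟩, hS.2⟩
    have hdvd : ((X j : R) - X i) ^ 2 ∣ V2 n S := by
      have := Finset.dvd_prod_of_mem (fun p => ((X p.2 : R) - X p.1) ^ 2) hpair
      simpa [V2] using this
    exact (hdvd.mul_left _).mul_right _
  · set M := (Finset.powersetCard k (I n)).filter (fun S => ¬ (i ∈ S ↔ j ∈ S)) with hM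
    have hsplit : ∀ S ∈ M, PP k iv S * V2 n S * DD n S
        = ((X j : R) - X i) *
          ((if i ∈ S then (1 : R) else -1) * (PP k iv S * V2 n S * EE n i j S)) := by
      intro S hS
      rw [hM, Finset.mem_filter] at hS
      by_cases hiS : i ∈ S
      · have hjS : j ∉ S := fun h => hS.2 (iff_of_true hiS h)
        have hmem : ((i, j) : ℕ × ℕ) ∈ S ×ˢ (I n \ S) :=
          Finset.mem_product.mpr ⟨hiS, Finset.mem_sdiff.mpr ⟨hj, hjS⟩⟩
        have hDD : DD n S = ((X j : R) - X i) * EE n i j S := by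
          rw [DD, EE, if_pos hiS, ← Finset.mul_prod_erase _ _ hmem]
        rw [hDD, if_pos hiS]; ring
      · have hjS : j ∈ S := by
          by_contra hjS
          exact hS.2 (iff_of_false hiS hjS)
        have hmem : ((j, i) : ℕ × ℕ) ∈ S ×ˢ (I n \ S) :=
          Finset.mem_product.mpr ⟨hjS, Finset.mem_sdiff.mpr ⟨hi, hiS⟩⟩
        have hDD : DD n S = ((X i : R) - X j) * EE n i j S := by
          rw [DD, EE, if_neg hiS, ← Finset.mul_prod_erase _ _ hmem]
        rw [hDD, if_neg hiS]; ring
    rw [Finset.sum_congr rfl hsplit, ← Finset.mul_sum, pow_two]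
    apply mul_dvd_mul_left
    have hμ : μ i j (∑ S ∈ M,
        (if i ∈ S then (1 : R) else -1) * (PP k iv S * V2 n S * EE n i j S)) = 0 := by
      rw [map_sum]
      apply Finset.sum_involution (fun S _ => S.image τ)
      · intro S hS
        rw [hM, Finset.mem_filter] at hS
        by_cases hiS : i ∈ S
        · have hjS : j ∉ S := fun h => hS.2 (iff_of_true hiS h)
          have hiS' : i ∉ S.image τ := fun h => hjS (i_mem_image_tau.mp h)
          have e1 : μ i j (PP k iv (S.image τ) * V2 n (S.image τ) * EE n i j (S.image τ))
              = μ i j (PP k iv S * V2 n S * EE n i j S) := by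
            rw [map_mul, map_mul, map_mul, map_mul, mu_PP hij k iv S, mu_V2 hij hi hj S,
              mu_EE hij hi hj hiS hjS]
          rw [if_pos hiS, if_neg hiS', one_mul, neg_one_mul, map_neg, e1, add_neg_cancel]
        · have hjS : j ∈ S := by
            by_contra hjS; exact hS.2 (iff_of_false hiS hjS)
          have hiS' : i ∈ S.image τ := i_mem_image_tau.mpr hjS
          have h1 := mu_PP hij k iv (S.image τ)
          have h2 := mu_V2 hij hi hj (S.image τ)
          have h3 := mu_EE hij hi hj hiS' (fun h => hiS (j_mem_image_tau.mp h))
          rw [image_tau_image_tau] at h1 h2 h3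
          have e1 : μ i j (PP k iv S * V2 n S * EE n i j S)
              = μ i j (PP k iv (S.image τ) * V2 n (S.image τ) * EE n i j (S.image τ)) := by
            rw [map_mul, map_mul, map_mul, map_mul, h1, h2, h3]
          rw [if_neg hiS, if_pos hiS', neg_one_mul, one_mul, map_neg, e1, neg_add_cancel]
      · intro S hS _
        rw [hM, Finset.mem_filter] at hS
        intro h
        apply hS.2
        constructor
        · intro hiS
          have hj2 : j ∈ S.image τ := j_mem_image_tau.mpr hiS
          rwa [h] at hj2
        · intro hjS
          have hi2 : i ∈ S.image τ := i_mem_image_tau.mpr hjS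
          rwa [h] at hi2
      · intro S _
        exact image_tau_image_tau S
      · intro S hS
        rw [hM, Finset.mem_filter] at hS
        rw [hM, Finset.mem_filter]
        refine ⟨image_tau_mem_powersetCard hi hj hS.1, ?_⟩
        intro hiff
        apply hS.2
        constructor
        · intro hiS
          exact i_mem_image_tau.mp (hiff.mpr (j_mem_image_tau.mpr hiS))
        · intro hjS
          exact j_mem_image_tau.mp (hiff.mp (i_mem_image_tau.mpr hjS))
    have hdvd := dvd_of_merge_eq_zero hij.ne hμ
    have hneg : ((X j : R) - X i) = -((X i : R) - X j) := by ring
    rw [hneg]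
    exact (neg_dvd).mpr hdvd

end pair

theorem prodsq_dvd_FF (n k : ℕ) (iv : Fin k → ℕ) :
    (∏ p ∈ pairs n, ((X p.2 : R) - X p.1) ^ 2) ∣ FF n k iv := by
  apply prod_sq_dvd (pairs n) (fun p => (X p.2 : R) - X p.1)
  · intro p hp
    rw [pairs, Finset.mem_filter] at hp
    exact prime_X_sub_X hp.2.ne'
  · intro a ha b hb hab
    rw [pairs, Finset.mem_filter] at ha hb
    have hne : ((a.1, a.2) : ℕ × ℕ) ≠ (b.1, b.2) := by
      simpa using hab
    exact not_dvd_of_ne ha.2 hb.2 hne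
  · intro p hp
    rw [pairs, Finset.mem_filter, Finset.mem_product] at hp
    exact sq_dvd_FF hp.2 hp.1.1 hp.1.2 k iv

lemma sq_sub_commQ (a b : ℚ) : (a - b) ^ 2 = (b - a) ^ 2 := by ring

theorem main_result (n k : ℕ) (iv : Fin k → ℕ) :
    ∃ z : ℤ,
      (∑ S ∈ Finset.powersetCard k (Finset.Icc 1 n),
        (∏ l : Fin k, ((∑ T ∈ S.powersetCard (l.1 + 1), ∏ m ∈ T, (m : ℚ)) ^ (iv l))) /
        (∏ a ∈ S, ∏ b ∈ Finset.Icc 1 n \ S, ((b : ℚ) - (a : ℚ))))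
      = (z : ℚ) := by
  classical
  obtain ⟨Q, hQ⟩ := prodsq_dvd_FF n k iv
  refine ⟨MvPolynomial.eval (fun m : ℕ => (m : ℤ)) Q, ?_⟩
  set φq : R →+* ℚ := eval₂Hom (Int.castRingHom ℚ) (fun m => (m : ℚ)) with hφq
  have hXq : ∀ m : ℕ, φq (X m) = (m : ℚ) := fun m => by simp [hφq]
  set Δq : ℚ := ∏ p ∈ pairs n, ((p.2 : ℚ) - (p.1 : ℚ)) with hΔq
  have hΔne : Δq ≠ 0 := by
    rw [hΔq]
    apply Finset.prod_ne_zero_iff.mpr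
    intro p hp
    rw [pairs, Finset.mem_filter] at hp
    exact sub_ne_zero.mpr (by exact_mod_cast hp.2.ne')
  have hPP : ∀ S : Finset ℕ, φq (PP k iv S)
      = ∏ l : Fin k, ((∑ T ∈ S.powersetCard (l.1 + 1), ∏ m ∈ T, (m : ℚ)) ^ (iv l)) := by
    intro S
    rw [PP, map_prod]
    refine Finset.prod_congr rfl fun l _ => ?_
    rw [map_pow, map_sum]
    congr 1
    refine Finset.sum_congr rfl fun T _ => ?_
    rw [map_prod]
    exact Finset.prod_congr rfl fun m _ => hXq m
  have hDD : ∀ S : Finset ℕ, φq (DD n S)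
      = ∏ a ∈ S, ∏ b ∈ Finset.Icc 1 n \ S, ((b : ℚ) - (a : ℚ)) := by
    intro S
    calc φq (DD n S) = ∏ q ∈ S ×ˢ (I n \ S), ((q.2 : ℚ) - (q.1 : ℚ)) := by
          rw [DD, map_prod]
          exact Finset.prod_congr rfl fun q _ => by rw [map_sub, hXq, hXq]
      _ = _ := Finset.prod_product' S (I n \ S) (fun a b => ((b : ℚ) - (a : ℚ)))
  have hV2 : ∀ S : Finset ℕ, φq (V2 n S)
      = ∏ p ∈ (pairs n).filter (fun p => (p.1 ∈ S ↔ p.2 ∈ S)),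
          ((p.2 : ℚ) - (p.1 : ℚ)) ^ 2 := by
    intro S
    rw [V2, map_prod]
    exact Finset.prod_congr rfl fun p _ => by rw [map_pow, map_sub, hXq, hXq]
  have hDne : ∀ S : Finset ℕ, S ⊆ I n → φq (DD n S) ≠ 0 := by
    intro S hSI
    rw [hDD S]
    apply Finset.prod_ne_zero_iff.mpr
    intro a ha
    apply Finset.prod_ne_zero_iff.mpr
    intro b hb
    rw [Finset.mem_sdiff] at hb
    have : b ≠ a := fun h => hb.2 (h ▸ ha)
    exact sub_ne_zero.mpr (by exact_mod_cast this)
  have hV2D : ∀ S : Finset ℕ, S ⊆ I n →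
      φq (V2 n S) * (φq (DD n S)) ^ 2 = Δq ^ 2 := by
    intro S hSI
    have h1 : Δq ^ 2 = ∏ p ∈ pairs n, ((p.2 : ℚ) - (p.1 : ℚ)) ^ 2 := by
      rw [hΔq, ← Finset.prod_pow]
    rw [h1, ← Finset.prod_filter_mul_prod_filter_not (pairs n)
      (fun p => (p.1 ∈ S ↔ p.2 ∈ S)) (fun p => ((p.2 : ℚ) - (p.1 : ℚ)) ^ 2)]
    rw [hV2 S]
    congr 1
    rw [hDD S, ← Finset.prod_product' S (Finset.Icc 1 n \ S) (fun a b => ((b : ℚ) - (a : ℚ))), ← Finset.prod_pow]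
    refine Finset.prod_nbij' (fun q => if q.1 < q.2 then q else (q.2, q.1))
      (fun p => if p.1 ∈ S then p else (p.2, p.1)) ?_ ?_ ?_ ?_ ?_
    · intro q hq
      rw [Finset.mem_product, Finset.mem_sdiff] at hq
      obtain ⟨h1', h2', h3'⟩ := hq
      by_cases hlt : q.1 < q.2
      · rw [if_pos hlt, Finset.mem_filter, pairs, Finset.mem_filter, Finset.mem_product]
        exact ⟨⟨⟨hSI h1', h2'⟩, hlt⟩, fun h => h3' (h.mp h1')⟩
      · have hne : q.1 ≠ q.2 := fun h => h3' (h ▸ h1')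
        have hlt2 : q.2 < q.1 := by omega
        rw [if_neg hlt, Finset.mem_filter, pairs, Finset.mem_filter, Finset.mem_product]
        exact ⟨⟨⟨h2', hSI h1'⟩, hlt2⟩, fun h => h3' (h.mpr h1')⟩
    · intro p hp
      rw [Finset.mem_filter, pairs, Finset.mem_filter, Finset.mem_product] at hp
      obtain ⟨⟨⟨h1', h2'⟩, hlt⟩, hmix⟩ := hp
      by_cases h1S : p.1 ∈ S
      · have h2S : p.2 ∉ S := fun h => hmix (iff_of_true h1S h)
        rw [if_pos h1S, Finset.mem_product, Finset.mem_sdiff]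
        exact ⟨h1S, h2', h2S⟩
      · have h2S : p.2 ∈ S := by
          by_contra h
          exact hmix (iff_of_false h1S h)
        rw [if_neg h1S, Finset.mem_product, Finset.mem_sdiff]
        exact ⟨h2S, h1', h1S⟩
    · intro q hq
      rw [Finset.mem_product, Finset.mem_sdiff] at hq
      obtain ⟨h1', h2', h3'⟩ := hq
      by_cases hlt : q.1 < q.2
      · rw [if_pos hlt, if_pos h1']
      · rw [if_neg hlt, if_neg (show ((q.2, q.1) : ℕ × ℕ).1 ∉ S from h3')]
    · intro p hp
      rw [Finset.mem_filter, pairs, Finset.mem_filter] at hp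
      have hlt := hp.1.2
      by_cases h1S : p.1 ∈ S
      · rw [if_pos h1S, if_pos hlt]
      · rw [if_neg h1S,
          if_neg (show ¬ (((p.2, p.1) : ℕ × ℕ).1 < ((p.2, p.1) : ℕ × ℕ).2) from hlt.asymm)]
    · intro q hq
      by_cases hlt : q.1 < q.2
      · rw [if_pos hlt]
      · rw [if_neg hlt]
        exact sq_sub_commQ _ _
  have key : ∀ S ∈ Finset.powersetCard k (Finset.Icc 1 n),
      (∏ l : Fin k, ((∑ T ∈ S.powersetCard (l.1 + 1), ∏ m ∈ T, (m : ℚ)) ^ (iv l))) /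
        (∏ a ∈ S, ∏ b ∈ Finset.Icc 1 n \ S, ((b : ℚ) - (a : ℚ)))
      = φq (PP k iv S * V2 n S * DD n S) / Δq ^ 2 := by
    intro S hS
    have hSI : S ⊆ I n := (Finset.mem_powersetCard.mp hS).1
    rw [map_mul, map_mul, ← hPP S, ← hDD S]
    rw [div_eq_div_iff (hDne S hSI) (pow_ne_zero 2 hΔne)]
    calc φq (PP k iv S) * Δq ^ 2
        = φq (PP k iv S) * (φq (V2 n S) * φq (DD n S) ^ 2) := by rw [hV2D S hSI]
      _ = φq (PP k iv S) * φq (V2 n S) * φq (DD n S) * φq (DD n S) := by ring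
  rw [Finset.sum_congr rfl key, ← Finset.sum_div, ← map_sum]
  have hFF : (∑ S ∈ Finset.powersetCard k (Finset.Icc 1 n),
      PP k iv S * V2 n S * DD n S) = FF n k iv := rfl
  rw [hFF, hQ, map_mul]
  have hprodsq : φq (∏ p ∈ pairs n, ((X p.2 : R) - X p.1) ^ 2) = Δq ^ 2 := by
    rw [map_prod, hΔq, ← Finset.prod_pow]
    exact Finset.prod_congr rfl fun p _ => by rw [map_pow, map_sub, hXq, hXq]
  rw [hprodsq, mul_comm, mul_div_assoc, div_self (pow_ne_zero 2 hΔne), mul_one]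
  have hφcast : φq = (Int.castRingHom ℚ).comp (MvPolynomial.eval (fun m : ℕ => (m : ℤ))) := by
    apply MvPolynomial.ringHom_ext
    · intro r; simp [hφq]
    · intro a; simp [hφq]
  rw [hφcast]
  simp

end main

end ChernAux

/-- when `i₁ + 2i₂ + ⋯ + k·i_k = k(n−k)`, the rational number
`Σ_S (∏_l e_l(S)^{i_l}) / (∏_{i∈S} ∏_{j∉S} (j − i))`, summed over all `k`-element
subsets `S` of `{1,…,n}`, is an integer (it is the ordinary Chern number
`∫_{G_k(ℂⁿ)} c₁^{i₁}⋯c_k^{i_k}`). -/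
theorem ordinary_chern_number_is_integer (n k : ℕ) (hk : k ≤ n) (i : Fin k → ℕ)
    (hdeg : ∑ l : Fin k, (l.1 + 1) * i l = k * (n - k)) :
    ∃ z : ℤ,
      (∑ S ∈ Finset.powersetCard k (Finset.Icc 1 n),
        (∏ l : Fin k, ((∑ T ∈ S.powersetCard (l.1 + 1), ∏ m ∈ T, (m : ℚ)) ^ (i l))) /
        (∏ a ∈ S, ∏ b ∈ Finset.Icc 1 n \ S, ((b : ℚ) - (a : ℚ))))
      = (z : ℚ) :=
  ChernAux.main_result n k i
end
end
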